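/- Let ζ ∈ ℂⁿ satisfy ζ ⊙ ζ = 0, let γ : ℝⁿ → ℝ be smooth with γ > 0 everywhere, set q := Δ(γ^{1/2})/γ^{1/2}, and let r : ℝⁿ → ℂ be a smooth solution of Δr + 2 ζ ⊙ ∇r − q r = q on ℝⁿ. Then the complex geometric optics function u(x) := e^{ζ·x} γ(x)^{−1/2} (1 + r(x)) satisfies the conductivity equation ∇·(γ ∇u) = 0 on ℝⁿ. -/

import Mathlib

/-!
Put `s = γ^{1/2}` and `w = e^{ζ·x} (1 + r)`, so that `u = w / s`. The Liouville identity
`∇·(s² ∇(w/s)) = s Δw - w Δs` reduces the claim to computing `Δw` and `Δs`. Because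
`ζ ⊙ ζ = 0`, the exponential contributes no zeroth-order term, so
`Δw = e^{ζ·x} (Δr + 2 ζ ⊙ ∇r)`, while `Δs = q s` by definition of `q`. Hence
`∇·(γ ∇u) = e^{ζ·x} s (Δr + 2 ζ ⊙ ∇r - q r - q)`, which vanishes by the equation for `r`.
-/

open scoped BigOperators

noncomputable section

/-- Partial derivative in the j-th coordinate direction. -/
noncomputable def pd {n : ℕ} {E : Type*} [NormedAddCommGroup E] [NormedSpace ℝ E]
    (j : Fin n) (f : (Fin n → ℝ) → E) (x : Fin n → ℝ) : E :=
  fderiv ℝ f x (Pi.single j 1)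

/-- Laplacian: sum of second partial derivatives. -/
noncomputable def lap {n : ℕ} {E : Type*} [NormedAddCommGroup E] [NormedSpace ℝ E]
    (f : (Fin n → ℝ) → E) (x : Fin n → ℝ) : E :=
  ∑ j, pd j (fun y => pd j f y) x

section Calculus

variable {n : ℕ} (j : Fin n)

theorem contDiff_pd {E : Type*} [NormedAddCommGroup E] [NormedSpace ℝ E] {m : WithTop ℕ∞}
    {f : (Fin n → ℝ) → E} (hf : ContDiff ℝ (m + 1) f) : ContDiff ℝ m (pd j f) :=
  (hf.fderiv_right le_rfl).clm_apply contDiff_const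

theorem ContDiff.differentiable_pd {E : Type*} [NormedAddCommGroup E] [NormedSpace ℝ E]
    {f : (Fin n → ℝ) → E} (hf : ContDiff ℝ 2 f) : Differentiable ℝ (pd j f) :=
  (contDiff_pd (m := 1) j hf).differentiable one_ne_zero

variable {f g : (Fin n → ℝ) → ℂ} {x : Fin n → ℝ}

theorem pd_add (hf : DifferentiableAt ℝ f x) (hg : DifferentiableAt ℝ g x) :
    pd j (fun y => f y + g y) x = pd j f x + pd j g x := by
  simp only [pd, fderiv_fun_add hf hg, add_apply]

theorem pd_sub (hf : DifferentiableAt ℝ f x) (hg : DifferentiableAt ℝ g x) :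
    pd j (fun y => f y - g y) x = pd j f x - pd j g x := by
  simp only [pd, fderiv_fun_sub hf hg, sub_apply]

theorem pd_mul (hf : DifferentiableAt ℝ f x) (hg : DifferentiableAt ℝ g x) :
    pd j (fun y => f y * g y) x = pd j f x * g x + f x * pd j g x := by
  simp only [pd, fderiv_fun_mul hf hg, add_apply, smul_apply, smul_eq_mul]
  ring

theorem pd_const_mul (c : ℂ) (hf : DifferentiableAt ℝ f x) :
    pd j (fun y => c * f y) x = c * pd j f x := by
  rw [pd_mul j (differentiableAt_const c) hf, pd, fderiv_const_apply]
  simp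

theorem pd_const_add (c : ℂ) : pd j (fun y => c + f y) = pd j f := by
  funext x
  simp only [pd, fderiv_const_add]

theorem pd_inv (hf : DifferentiableAt ℝ f x) (hx : f x ≠ 0) :
    pd j (fun y => (f y)⁻¹) x = -(pd j f x / f x ^ 2) := by
  have h := ((hasFDerivAt_inv' (𝕜 := ℝ) hx).comp x hf.hasFDerivAt).fderiv
  rw [pd, show (fun y => (f y)⁻¹) = Inv.inv ∘ f from rfl, h]
  simp only [ContinuousLinearMap.comp_apply, neg_apply,
    ContinuousLinearMap.mulLeftRight_apply]
  field_simp
  rfl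

theorem pd_div (hf : DifferentiableAt ℝ f x) (hg : DifferentiableAt ℝ g x) (hx : g x ≠ 0) :
    pd j (fun y => f y / g y) x = (pd j f x * g x - f x * pd j g x) / g x ^ 2 := by
  simp only [div_eq_mul_inv]
  rw [pd_mul (g := fun y => (g y)⁻¹) j hf (hg.inv hx), pd_inv j hg hx]
  field_simp
  ring

theorem pd_ofReal {f : (Fin n → ℝ) → ℝ} (hf : DifferentiableAt ℝ f x) :
    pd j (fun y => (f y : ℂ)) x = pd j f x := by
  have h : fderiv ℝ (fun y => (f y : ℂ)) x = Complex.ofRealCLM.comp (fderiv ℝ f x) :=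
    (Complex.ofRealCLM.hasFDerivAt.comp x hf.hasFDerivAt).fderiv
  rw [pd, h]
  rfl

theorem lap_ofReal {f : (Fin n → ℝ) → ℝ} (hf : ContDiff ℝ 2 f) (x : Fin n → ℝ) :
    lap (fun y => (f y : ℂ)) x = lap f x := by
  have hpd : ∀ j, pd j (fun y => (f y : ℂ)) = fun y => ((pd j f y : ℝ) : ℂ) := fun j =>
    funext fun y => pd_ofReal j (hf.differentiable two_ne_zero y)
  simp only [lap, hpd, pd_ofReal _ (hf.differentiable_pd _ x), Complex.ofReal_sum]

theorem lap_const_add (c : ℂ) (x : Fin n → ℝ) : lap (fun y => c + f y) x = lap f x := by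
  simp only [lap, pd_const_add]

end Calculus

section Identities

variable {n : ℕ}

theorem sq_mul_pd_div {s w : (Fin n → ℝ) → ℂ} {y : Fin n → ℝ} (j : Fin n)
    (hs : DifferentiableAt ℝ s y) (hw : DifferentiableAt ℝ w y) (hy : s y ≠ 0) :
    s y ^ 2 * pd j (fun z => w z / s z) y = s y * pd j w y - w y * pd j s y := by
  rw [pd_div j hw hs hy]
  field_simp

theorem sum_pd_sq_mul_pd_div {s w : (Fin n → ℝ) → ℂ} (hs : ContDiff ℝ 2 s)
    (hs0 : ∀ y, s y ≠ 0) (hw : ContDiff ℝ 2 w) (x : Fin n → ℝ) :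
    ∑ j, pd j (fun y => s y ^ 2 * pd j (fun z => w z / s z) y) x
      = s x * lap w x - w x * lap s x := by
  have ds := hs.differentiable two_ne_zero
  have dw := hw.differentiable two_ne_zero
  have dpw := hw.differentiable_pd
  have dps := hs.differentiable_pd
  have hj : ∀ j, pd j (fun y => s y ^ 2 * pd j (fun z => w z / s z) y) x
      = s x * pd j (pd j w) x - w x * pd j (pd j s) x := fun j => by
    simp only [sq_mul_pd_div j (ds _) (dw _) (hs0 _)]
    rw [pd_sub (f := fun y => s y * pd j w y) (g := fun y => w y * pd j s y) j
        ((ds x).mul (dpw j x)) ((dw x).mul (dps j x)),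
      pd_mul j (ds x) (dpw j x), pd_mul j (dw x) (dps j x)]
    ring
  simp only [hj, lap, Finset.sum_sub_distrib, Finset.mul_sum]

theorem contDiff_cexp_dot (ζ : Fin n → ℂ) {m : WithTop ℕ∞} :
    ContDiff ℝ m fun y : Fin n → ℝ => Complex.exp (∑ i, ζ i * (y i : ℂ)) :=
  Complex.contDiff_exp.comp <| ContDiff.sum fun i _ =>
    contDiff_const.mul (Complex.ofRealCLM.contDiff.comp (contDiff_apply ℝ ℝ i))

theorem pd_cexp_dot (ζ : Fin n → ℂ) (j : Fin n) (x : Fin n → ℝ) :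
    pd j (fun y => Complex.exp (∑ i, ζ i * (y i : ℂ))) x
      = ζ j * Complex.exp (∑ i, ζ i * (x i : ℂ)) := by
  let L : (Fin n → ℝ) →L[ℝ] ℂ :=
    ∑ i, ζ i • (Complex.ofRealCLM.comp (ContinuousLinearMap.proj i))
  have hL : ∀ y, L y = ∑ i, ζ i * (y i : ℂ) := fun y => by simp [L]
  have hLj : L (Pi.single j 1) = ζ j := by
    rw [hL, Finset.sum_eq_single j] <;> simp +contextual
  have h := (Complex.hasDerivAt_exp (L x)).comp_hasFDerivAt x L.hasFDerivAt
  simp only [Function.comp_def, hL] at h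
  rw [pd, h.fderiv, smul_apply, hLj, smul_eq_mul, mul_comm]

theorem lap_cexp_dot_mul (ζ : Fin n → ℂ) {v : (Fin n → ℝ) → ℂ} (hv : ContDiff ℝ 2 v)
    (x : Fin n → ℝ) :
    lap (fun y => Complex.exp (∑ i, ζ i * (y i : ℂ)) * v y) x
      = Complex.exp (∑ i, ζ i * (x i : ℂ))
        * (lap v x + 2 * ∑ j, ζ j * pd j v x + (∑ j, ζ j * ζ j) * v x) := by
  set E := fun y : Fin n → ℝ => Complex.exp (∑ i, ζ i * (y i : ℂ))
  have dE : Differentiable ℝ E := (contDiff_cexp_dot ζ (m := 1)).differentiable one_ne_zero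
  have dv := hv.differentiable two_ne_zero
  have h1 : ∀ j, pd j (fun y => E y * v y) = fun y => E y * (ζ j * v y + pd j v y) :=
    fun j => funext fun y => by
      rw [pd_mul j (dE y) (dv y), pd_cexp_dot]
      ring
  have h2 : ∀ j, pd j (fun y => E y * (ζ j * v y + pd j v y)) x
      = E x * (ζ j * ζ j * v x + 2 * (ζ j * pd j v x) + pd j (pd j v) x) := fun j => by
    have dpv := hv.differentiable_pd j x
    rw [pd_mul (g := fun y => ζ j * v y + pd j v y) j (dE x) (((dv x).const_mul _).add dpv),
      pd_add j ((dv x).const_mul _) dpv, pd_const_mul j _ (dv x), pd_cexp_dot]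
    ring
  show lap (fun y => E y * v y) x = E x * _
  simp only [lap, h1, h2, ← Finset.mul_sum]
  congr 1
  simp only [Finset.sum_add_distrib, Finset.mul_sum, Finset.sum_mul]
  ring

end Identities

theorem stmt_5 {n : ℕ} (ζ : Fin n → ℂ) (hζ : ∑ j, ζ j * ζ j = 0)
    (γ : (Fin n → ℝ) → ℝ) (hγ : ContDiff ℝ (⊤ : ℕ∞) γ) (hγpos : ∀ x, 0 < γ x)
    (q : (Fin n → ℝ) → ℝ)
    (hq : ∀ x, q x = lap (fun y => Real.sqrt (γ y)) x / Real.sqrt (γ x))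
    (r : (Fin n → ℝ) → ℂ) (hr : ContDiff ℝ (⊤ : ℕ∞) r)
    (hreq : ∀ x, lap r x + 2 * ∑ j, ζ j * pd j r x - (q x : ℂ) * r x = (q x : ℂ))
    (u : (Fin n → ℝ) → ℂ)
    (hu : ∀ x, u x = Complex.exp (∑ j, ζ j * (x j : ℂ)) * ((Real.sqrt (γ x) : ℂ))⁻¹ * (1 + r x)) :
    ∀ x, (∑ j, pd j (fun y => (γ y : ℂ) * pd j u y) x) = 0 := by
  intro x
  set s := fun y => Real.sqrt (γ y)
  have hs : ContDiff ℝ 2 s :=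
    (hγ.sqrt fun y => (hγpos y).ne').of_le (WithTop.coe_le_coe.2 le_top)
  have hs0 : ∀ y, (s y : ℂ) ≠ 0 := fun y =>
    Complex.ofReal_ne_zero.2 (Real.sqrt_pos.2 (hγpos y)).ne'
  have hsC : ContDiff ℝ 2 fun y => (s y : ℂ) := Complex.ofRealCLM.contDiff.comp hs
  have hr2 : ContDiff ℝ 2 r := hr.of_le (WithTop.coe_le_coe.2 le_top)
  have hγs : ∀ y, (γ y : ℂ) = (s y : ℂ) ^ 2 := fun y => by
    rw [← Complex.ofReal_pow, Real.sq_sqrt (hγpos y).le]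
  have hlaps : lap s x = q x * s x := by
    rw [hq x, div_mul_cancel₀ _ (Real.sqrt_pos.2 (hγpos x)).ne']
  have hu' : u = fun y => Complex.exp (∑ j, ζ j * (y j : ℂ)) * (1 + r y) / (s y : ℂ) :=
    funext fun y => by rw [hu]; ring
  subst hu'
  simp only [hγs]
  rw [sum_pd_sq_mul_pd_div hsC hs0 ((contDiff_cexp_dot ζ).mul (contDiff_const.add hr2)),
    lap_cexp_dot_mul ζ (contDiff_const.add hr2), lap_const_add, lap_ofReal hs, hlaps]
  simp only [pd_const_add]
  push_cast
  linear_combination (Complex.exp (∑ j, ζ j * (x j : ℂ)) * s x) * hreq x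
    + (Complex.exp (∑ j, ζ j * (x j : ℂ)) * s x * (1 + r x)) * hζ
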